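/- Let G be the directed graph with two vertices I and J and five edges: a self-loop e at I, an edge f from I to J, two self-loops g and h at J, and an edge i from J to I. Label the edges by Φ(e) = Φ(f) = Φ(g) = Φ(h) = a and Φ(i) = b, let X be the edge shift of G (the shift of finite type whose points are bi-infinite edge paths in G), let π : X → Y be the induced 1-block factor map onto the sofic shift Y, and let μ be the stationary fully supported 1-step Markov measure on X with transition probabilities 1/2 on e, 1/2 on f, 1/4 on g, 1/4 on h and 1/2 on i. Then the push-forward measure ν = πμ is not a Gibbs measure for any continuous potential f : Y → ℝ (indeed ν([aⁿ]₀) equals (2+n)·2⁻ⁿ up to the choice of initial distribution, and no exponential (exp f(a^∞))ⁿ can match the decay of n·2⁻ⁿ). -/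

import Mathlib

open MeasureTheory Filter Topology
open scoped ENNReal

namespace GibbsPaper

universe u

variable {A : Type*} {B : Type*}

/-- The shift map `(σ x) i = x (i+1)` on the full shift `ℤ → A`. -/
def shiftMap (x : ℤ → A) : ℤ → A := fun i => x (i + 1)

/-- The 1-step shift of finite type determined by the allowed-transition set `E`. -/
def SFT (E : Set (A × A)) : Set (ℤ → A) := {x | ∀ i : ℤ, (x i, x (i + 1)) ∈ E}

/-- `w` is a word of the language of `X`. -/
def WordIn (X : Set (ℤ → A)) (w : List A) : Prop :=
  ∃ x ∈ X, ∃ k : ℤ, ∀ j : Fin w.length, x (k + (j.1 : ℤ)) = w.get j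

/-- `X` is (topologically) mixing. -/
def Mixing (X : Set (ℤ → A)) : Prop :=
  ∀ u w : List A, WordIn X u → WordIn X w →
    ∃ N : ℕ, ∀ n : ℕ, N ≤ n → ∃ v : List A, v.length = n ∧ WordIn X (u ++ v ++ w)

/-- The 1-block (sliding block) code induced by a symbol map `Φ`. -/
def blockCode (Φ : A → B) (x : ℤ → A) : ℤ → B := fun i => Φ (x i)

/-- The fiber `π⁻¹(y)` of the 1-block factor map induced by `Φ`. -/
def fiber (X : Set (ℤ → A)) (Φ : A → A) (y : ℤ → A) : Set (ℤ → A) :=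
  {x | x ∈ X ∧ blockCode Φ x = y}

/-- `xb` is a right `m`-bridge from `x` to `x'` (all of them preimages of `y`). -/
def RightBridge (X : Set (ℤ → A)) (Φ : A → A) (y x x' xb : ℤ → A) (m : ℤ) : Prop :=
  xb ∈ fiber X Φ y ∧ (∀ i : ℤ, i ≤ m → xb i = x i) ∧
    ∃ n : ℤ, m < n ∧ ∀ i : ℤ, n ≤ i → xb i = x' i

/-- Right transition `x →ʳ x'`: a right `m`-bridge from `x` to `x'` for every `m`. -/
def RightTrans (X : Set (ℤ → A)) (Φ : A → A) (y x x' : ℤ → A) : Prop :=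
  ∀ m : ℤ, ∃ xb : ℤ → A, RightBridge X Φ y x x' xb m

/-- Right equivalence `x ∼ʳ x'`. -/
def RightEquiv (X : Set (ℤ → A)) (Φ : A → A) (y x x' : ℤ → A) : Prop :=
  RightTrans X Φ y x x' ∧ RightTrans X Φ y x' x

/-- The right transition class of `x` over `y`. -/
def rightClass (X : Set (ℤ → A)) (Φ : A → A) (y x : ℤ → A) : Set (ℤ → A) :=
  {x' | x' ∈ fiber X Φ y ∧ RightEquiv X Φ y x x'}

/-- `C` is a right transition class over `y`. -/
def IsRightClass (X : Set (ℤ → A)) (Φ : A → A) (y : ℤ → A) (C : Set (ℤ → A)) : Prop :=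
  ∃ x ∈ fiber X Φ y, C = rightClass X Φ y x

/-- Transition `C →ʳ C'` between right classes. -/
def ClassTrans (X : Set (ℤ → A)) (Φ : A → A) (y : ℤ → A) (C C' : Set (ℤ → A)) : Prop :=
  ∃ x ∈ C, ∃ x' ∈ C', RightTrans X Φ y x x'

/-- `xb` is a left `m`-bridge from `x` to `x'`. -/
def LeftBridge (X : Set (ℤ → A)) (Φ : A → A) (y x x' xb : ℤ → A) (m : ℤ) : Prop :=
  xb ∈ fiber X Φ y ∧ (∀ i : ℤ, m ≤ i → xb i = x i) ∧
    ∃ n : ℤ, n < m ∧ ∀ i : ℤ, i ≤ n → xb i = x' i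

/-- Left transition `x →ˡ x'`. -/
def LeftTrans (X : Set (ℤ → A)) (Φ : A → A) (y x x' : ℤ → A) : Prop :=
  ∀ m : ℤ, ∃ xb : ℤ → A, LeftBridge X Φ y x x' xb m

/-- Left equivalence `x ∼ˡ x'`. -/
def LeftEquiv (X : Set (ℤ → A)) (Φ : A → A) (y x x' : ℤ → A) : Prop :=
  LeftTrans X Φ y x x' ∧ LeftTrans X Φ y x' x

/-- The left transition class of `x` over `y`. -/
def leftClass (X : Set (ℤ → A)) (Φ : A → A) (y x : ℤ → A) : Set (ℤ → A) :=
  {x' | x' ∈ fiber X Φ y ∧ LeftEquiv X Φ y x x'}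

/-- `C` is a left transition class over `y`. -/
def IsLeftClass (X : Set (ℤ → A)) (Φ : A → A) (y : ℤ → A) (C : Set (ℤ → A)) : Prop :=
  ∃ x ∈ fiber X Φ y, C = leftClass X Φ y x

/-- Two points are left asymptotic. -/
def LeftAsymp (y y' : ℤ → A) : Prop := ∃ n : ℤ, ∀ i : ℤ, i ≤ n → y i = y' i

/-- Two points are right asymptotic. -/
def RightAsymp (y y' : ℤ → A) : Prop := ∃ n : ℤ, ∀ i : ℤ, n ≤ i → y i = y' i

/-- The factor map induced by `Φ` is right continuing. -/
def RightContinuing (X : Set (ℤ → A)) (Φ : A → A) : Prop :=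
  ∀ x ∈ X, ∀ y ∈ blockCode Φ '' X, LeftAsymp (blockCode Φ x) y →
    ∃ x' ∈ fiber X Φ y, LeftAsymp x x'

/-- The factor map induced by `Φ` is left continuing. -/
def LeftContinuing (X : Set (ℤ → A)) (Φ : A → A) : Prop :=
  ∀ x ∈ X, ∀ y ∈ blockCode Φ '' X, RightAsymp (blockCode Φ x) y →
    ∃ x' ∈ fiber X Φ y, RightAsymp x x'

/-- Bi-continuing factor map. -/
def BiContinuing (X : Set (ℤ → A)) (Φ : A → A) : Prop :=
  RightContinuing X Φ ∧ LeftContinuing X Φ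

/-- `y` is a (σ-)periodic point. -/
def IsPeriodicPt (y : ℤ → A) : Prop := ∃ p : ℕ, 0 < p ∧ shiftMap^[p] y = y

/-- `p` is the smallest period of the periodic point `y`. -/
def IsLeastPeriod (y : ℤ → A) (p : ℕ) : Prop :=
  0 < p ∧ shiftMap^[p] y = y ∧ ∀ q : ℕ, 0 < q → shiftMap^[q] y = y → p ≤ q

/-- The set `C` has period `p` (`σᵖ C = C`). -/
def HasClassPeriod (C : Set (ℤ → A)) (p : ℕ) : Prop :=
  0 < p ∧ (shiftMap^[p]) '' C = C

/-- `p` is the smallest period of the set `C`. -/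
def IsLeastClassPeriod (C : Set (ℤ → A)) (p : ℕ) : Prop :=
  HasClassPeriod C p ∧ ∀ q : ℕ, HasClassPeriod C q → p ≤ q

/-- The cylinder set of the word `w` placed at coordinate `k`. -/
def cylList (k : ℤ) (w : List A) : Set (ℤ → A) :=
  {x | ∀ j : Fin w.length, x (k + (j.1 : ℤ)) = w.get j}

/-- The cylinder set of all points agreeing with `z` on the coordinates `[m, n]`. -/
def cylSeg (z : ℤ → A) (m n : ℤ) : Set (ℤ → A) :=
  {x | ∀ i : ℤ, m ≤ i → i ≤ n → x i = z i}

/-- The union of the cylinder sets (on coordinates `[m,n]`) of the blocks appearing in `S`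
on the interval `[m,n]`. -/
def blockUnion (S : Set (ℤ → A)) (m n : ℤ) : Set (ℤ → A) :=
  {x | ∃ x' ∈ S, ∀ i : ℤ, m ≤ i → i ≤ n → x i = x' i}

/-- The transition-probability weight of a chain starting at `a`. -/
noncomputable def chainProb (P : A → A → ℝ≥0∞) : A → List A → ℝ≥0∞
  | _, [] => 1
  | a, b :: l => P a b * chainProb P b l

/-- The Markov probability of a word. -/
noncomputable def wordProb (p : A → ℝ≥0∞) (P : A → A → ℝ≥0∞) : List A → ℝ≥0∞
  | [] => 1
  | a :: l => p a * chainProb P a l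

/-- `μ` is the 1-step (stationary) Markov measure on `X` with initial probability vector `p`
and stochastic matrix `P`. -/
structure IsMarkov [Fintype A] [MeasurableSpace A] (X : Set (ℤ → A))
    (μ : Measure (ℤ → A)) (p : A → ℝ≥0∞) (P : A → A → ℝ≥0∞) : Prop where
  isProb : IsProbabilityMeasure μ
  shiftInv : ∀ s : Set (ℤ → A), MeasurableSet s → μ (shiftMap ⁻¹' s) = μ s
  initSum : ∑ a : A, p a = 1
  rowSum : ∀ a : A, ∑ b : A, P a b = 1
  cylIn : ∀ w : List A, WordIn X w → μ (cylList 0 w) = wordProb p P w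
  cylOut : ∀ w : List A, ¬ WordIn X w → μ (cylList 0 w) = 0

/-- `μ` gives positive measure to every cylinder of a word of the language of `X`. -/
def FullySupported [Fintype A] [MeasurableSpace A] (X : Set (ℤ → A))
    (μ : Measure (ℤ → A)) : Prop :=
  ∀ w : List A, WordIn X w → 0 < μ (cylList 0 w)

/-- `μ` is a fully supported 1-step Markov measure on `X`. -/
def IsFSMarkov [Fintype A] [MeasurableSpace A] (X : Set (ℤ → A))
    (μ : Measure (ℤ → A)) : Prop :=
  ∃ p P, IsMarkov X μ p P ∧ FullySupported X μ

/-- Birkhoff sum `S_0^{n-1} f (z)`. -/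
def birkhoff (f : (ℤ → A) → ℝ) (z : ℤ → A) (n : ℕ) : ℝ :=
  ∑ j ∈ Finset.range n, f (shiftMap^[j] z)

/-- The two-sided Gibbs inequality for `ν` on `Y` with potential `f`, constants `K₁, K₂`
and pressure constant `Pr`. -/
def GibbsIneq [Fintype A] [MeasurableSpace A] (Y : Set (ℤ → A)) (ν : Measure (ℤ → A))
    (f : (ℤ → A) → ℝ) (K₁ K₂ Pr : ℝ) : Prop :=
  ∀ z ∈ Y, ∀ n : ℕ, 1 ≤ n →
    K₁ < (ν (cylSeg z 0 ((n : ℤ) - 1))).toReal /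
        Real.exp (-(n : ℝ) * Pr + birkhoff f z n) ∧
    (ν (cylSeg z 0 ((n : ℤ) - 1))).toReal /
        Real.exp (-(n : ℝ) * Pr + birkhoff f z n) < K₂

/-- `ν` is a Gibbs measure on `Y` for the potential `f`. -/
def IsGibbs [Fintype A] [MeasurableSpace A] (Y : Set (ℤ → A)) (ν : Measure (ℤ → A))
    (f : (ℤ → A) → ℝ) : Prop :=
  ∃ K₁ K₂ Pr : ℝ, 0 < K₁ ∧ 0 < K₂ ∧ GibbsIneq Y ν f K₁ K₂ Pr


/-! ### Example 3.1: the labelled graph of Figure 1 -/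

/-- The five edges of the graph in Figure 1: `e` is a self-loop at the vertex `I`,
`f` goes from `I` to `J`, `g` and `h` are self-loops at `J`, and `i` goes from `J`
back to `I`. -/
inductive Edge5 : Type
  | e | f | g | h | i
deriving DecidableEq

instance instFintypeEdge5 : Fintype Edge5 where
  elems := {.e, .f, .g, .h, .i}
  complete := fun x => by cases x <;> simp

instance : MeasurableSpace Edge5 := ⊤
instance : TopologicalSpace Edge5 := ⊥
instance : DiscreteTopology Edge5 := ⟨rfl⟩

/-- Source vertex of an edge (`false` = `I`, `true` = `J`). -/
def src5 : Edge5 → Bool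
  | .e => false | .f => false | .g => true | .h => true | .i => true

/-- Target vertex of an edge. -/
def tgt5 : Edge5 → Bool
  | .e => false | .f => true | .g => true | .h => true | .i => false

/-- Allowed transitions of the edge shift: consecutive edges must be composable. -/
def EdgeSet5 : Set (Edge5 × Edge5) := {q | tgt5 q.1 = src5 q.2}

/-- The labelling of Figure 1: `e, f, g, h` are labelled `a` and `i` is labelled `b`
(we represent the label `a` by the symbol `e` and the label `b` by the symbol `i`). -/
def Label5 : Edge5 → Edge5
  | .i => .i
  | _ => .e

/-- The transition probability assigned to each edge (from its source vertex):
`1/2` on `e`, `1/2` on `f`, `1/4` on `g`, `1/4` on `h` and `1/2` on `i`. -/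
noncomputable def q5 : Edge5 → ℝ≥0∞
  | .e => 1/2 | .f => 1/2 | .g => 1/4 | .h => 1/4 | .i => 1/2

/-- The stochastic matrix on edges induced by the transition probabilities. -/
noncomputable def P5 : Edge5 → Edge5 → ℝ≥0∞ :=
  fun u v => if tgt5 u = src5 v then q5 v else 0

/-! A point of `π⁻¹[aⁿ]₀` reads a word of length `n` avoiding `i`, i.e. a path in the subgraph
`{e, f, g, h}`, which can cross from `I` to `J` at most once. Summing the Markov weights gives
`ν[aⁿ]₀ = (n pₑ + p_f + p_g + p_h) 2^{1-n}`. As `a^∞` is a fixed point, its Birkhoff sums are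
`n f(a^∞)`, so the Gibbs inequality at `a^∞` would keep a sequence `(n α + β) sⁿ` with `α > 0`
between two positive constants; but such a sequence tends to `0` if `s < 1` and to `∞` if
`s ≥ 1`. -/

section Cylinders

variable {A B : Type*}

lemma mem_cylList_ofFn {n : ℕ} {w : Fin n → A} {x : ℤ → A} :
    x ∈ cylList 0 (List.ofFn w) ↔ ∀ j : Fin n, x j = w j := by
  simp [cylList, Fin.forall_iff]

lemma measurableSet_cylList [MeasurableSpace A] [MeasurableSingletonClass A] (k : ℤ)
    (w : List A) : MeasurableSet (cylList k w) := by
  simp only [cylList, Set.ofPred_forall]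
  exact .iInter fun j => measurable_pi_apply _ (measurableSet_singleton _)

lemma measurableSet_cylSeg [MeasurableSpace A] [MeasurableSingletonClass A] (z : ℤ → A)
    (m n : ℤ) : MeasurableSet (cylSeg z m n) := by
  simp only [cylSeg, Set.ofPred_forall]
  exact .iInter fun i => .iInter fun _ => .iInter fun _ =>
    measurable_pi_apply _ (measurableSet_singleton _)

lemma measurable_blockCode [MeasurableSpace A] [MeasurableSpace B] {Φ : A → B}
    (hΦ : Measurable Φ) : Measurable (blockCode Φ) :=
  measurable_pi_lambda _ fun i => hΦ.comp (measurable_pi_apply i)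

lemma blockCode_preimage_cylSeg [Fintype A] [DecidableEq B] (Φ : A → B) (z : ℤ → B) (n : ℕ) :
    blockCode Φ ⁻¹' cylSeg z 0 (n - 1) =
      ⋃ w ∈ Fintype.piFinset (fun j : Fin n => {a | Φ a = z j}), cylList 0 (List.ofFn w) := by
  ext x
  simp only [Set.mem_preimage, Set.mem_iUnion, mem_cylList_ofFn, Fintype.mem_piFinset,
    Finset.mem_filter, Finset.mem_univ, true_and, exists_prop]
  constructor
  · intro hx
    exact ⟨fun j => x j, fun j => hx j (by positivity) (by omega), fun _ => rfl⟩
  · rintro ⟨w, hw, hxw⟩ i hi0 hin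
    lift i to ℕ using hi0
    rw [blockCode, hxw ⟨i, by omega⟩]
    exact hw _

lemma map_blockCode_cylSeg [Fintype A] [DecidableEq B] [MeasurableSpace A]
    [MeasurableSingletonClass A] [MeasurableSpace B] [MeasurableSingletonClass B] {Φ : A → B}
    (hΦ : Measurable Φ) (μ : Measure (ℤ → A)) (z : ℤ → B) (n : ℕ) :
    μ.map (blockCode Φ) (cylSeg z 0 (n - 1)) =
      ∑ w ∈ Fintype.piFinset (fun j : Fin n => {a | Φ a = z j}), μ (cylList 0 (List.ofFn w)) := by
  rw [Measure.map_apply (measurable_blockCode hΦ) (measurableSet_cylSeg _ _ _),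
    blockCode_preimage_cylSeg]
  refine measure_biUnion_finset (fun w _ w' _ hne => Set.disjoint_left.2 fun x hx hx' => hne ?_)
    fun w _ => measurableSet_cylList _ _
  funext j
  rw [← mem_cylList_ofFn.1 hx j, ← mem_cylList_ofFn.1 hx' j]

lemma birkhoff_of_shiftMap_eq {z : ℤ → A} (hz : shiftMap z = z) (f : (ℤ → A) → ℝ) (n : ℕ) :
    birkhoff f z n = n * f z := by
  simp [birkhoff, Function.iterate_fixed hz]

end Cylinders

section Markov

variable {A : Type*}

lemma isChain_of_chainProb_ne_zero {P : A → A → ℝ≥0∞} {R : A → A → Prop}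
    (hP : ∀ a b, P a b ≠ 0 → R a b) {a : A} {l : List A} (h : chainProb P a l ≠ 0) :
    List.IsChain R (a :: l) := by
  induction l generalizing a with
  | nil => exact .singleton a
  | cons b l ih =>
    obtain ⟨hab, hl⟩ := mul_ne_zero_iff.1 h
    exact List.isChain_cons_cons.2 ⟨hP a b hab, ih hl⟩

lemma wordIn_SFT_of_isChain {E : Set (A × A)} (hpred : ∀ a, ∃ b, (b, a) ∈ E)
    (hsucc : ∀ a, ∃ b, (a, b) ∈ E) {w : List A} (hw : w ≠ [])
    (h : List.IsChain (fun a b => (a, b) ∈ E) w) : WordIn (SFT E) w := by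
  choose pred hpred using hpred
  choose succ hsucc using hsucc
  -- extend `w` to the right by iterating `succ`, then to the left by iterating `pred`
  let r : ℕ → A := fun n =>
    if hn : n < w.length then w[n] else succ^[n + 1 - w.length] (w.getLast hw)
  have hr : ∀ n, (r n, r (n + 1)) ∈ E := by
    intro n
    rcases lt_trichotomy (n + 1) w.length with h1 | h1 | h1
    · simp only [r, dif_pos h1, dif_pos (by omega : n < w.length)]
      exact List.isChain_iff_getElem.1 h n h1
    · simp only [r, dif_pos (by omega : n < w.length), dif_neg (by omega : ¬ n + 1 < w.length)]
      rw [show n + 1 + 1 - w.length = 1 by omega, List.getLast_eq_getElem]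
      simpa [show n = w.length - 1 by omega] using hsucc _
    · simp only [r, dif_neg (by omega : ¬ n < w.length), dif_neg (by omega : ¬ n + 1 < w.length),
        show n + 1 + 1 - w.length = (n + 1 - w.length) + 1 by omega,
        Function.iterate_succ_apply']
      exact hsucc _
  let x : ℤ → A := fun i => if i < 0 then pred^[i.natAbs] (r 0) else r i.toNat
  refine ⟨x, fun i => ?_, 0, fun j => ?_⟩
  · rcases lt_trichotomy i (-1) with hi | rfl | hi
    · simp only [x]
      rw [if_pos (by omega), if_pos (by omega), show i.natAbs = (i + 1).natAbs + 1 by omega,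
        Function.iterate_succ_apply']
      exact hpred _
    · simpa [x] using hpred _
    · simp only [x, if_neg (by omega : ¬ i < 0), if_neg (by omega : ¬ i + 1 < 0),
        show (i + 1).toNat = i.toNat + 1 by omega]
      exact hr _
  · simp [x, r]

variable [Fintype A] [MeasurableSpace A] {X : Set (ℤ → A)} {μ : Measure (ℤ → A)}
  {p : A → ℝ≥0∞} {P : A → A → ℝ≥0∞}

lemma IsMarkov.init_ne_top (hμ : IsMarkov X μ p P) (a : A) : p a ≠ ⊤ :=
  ne_top_of_le_ne_top ENNReal.one_ne_top
    (hμ.initSum ▸ Finset.single_le_sum (fun _ _ => zero_le) (Finset.mem_univ a))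

lemma IsMarkov.init_pos (hμ : IsMarkov X μ p P) (hfs : FullySupported X μ) {a : A}
    (ha : WordIn X [a]) : 0 < p a := by
  simpa [hμ.cylIn _ ha, wordProb, chainProb] using hfs [a] ha

lemma IsMarkov.measure_cylList_cons {E : Set (A × A)} (hμ : IsMarkov (SFT E) μ p P)
    (hP : ∀ a b, P a b ≠ 0 → (a, b) ∈ E) (hpred : ∀ a, ∃ b, (b, a) ∈ E)
    (hsucc : ∀ a, ∃ b, (a, b) ∈ E) (a : A) (l : List A) :
    μ (cylList 0 (a :: l)) = wordProb p P (a :: l) := by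
  by_cases hw : WordIn (SFT E) (a :: l)
  · exact hμ.cylIn _ hw
  have hchain : chainProb P a l = 0 := by_contra fun hne =>
    hw (wordIn_SFT_of_isChain hpred hsucc (List.cons_ne_nil a l)
      (isChain_of_chainProb_ne_zero hP hne))
  rw [hμ.cylOut _ hw, wordProb, hchain, mul_zero]

end Markov

section ChainMass

variable {A : Type*}

noncomputable def chainMass (P : A → A → ℝ≥0∞) (S : Finset A) (m : ℕ) (a : A) : ℝ≥0∞ :=
  ∑ v ∈ Fintype.piFinset (fun _ : Fin m => S), chainProb P a (List.ofFn v)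

lemma sum_piFinset_const_succ {M : Type*} [AddCommMonoid M] (S : Finset A) (m : ℕ)
    (g : (Fin (m + 1) → A) → M) :
    ∑ w ∈ Fintype.piFinset (fun _ => S), g w =
      ∑ a ∈ S, ∑ v ∈ Fintype.piFinset (fun _ : Fin m => S), g (Fin.cons a v) := by
  have h := Finset.filter_piFinset_eq_map_consEquiv (fun _ : Fin (m + 1) => S) (fun _ => True)
  simp only [Finset.filter_true] at h
  rw [h, Finset.sum_map, Finset.sum_product]
  rfl

lemma chainMass_zero (P : A → A → ℝ≥0∞) (S : Finset A) (a : A) : chainMass P S 0 a = 1 := by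
  simp [chainMass, chainProb]

lemma chainMass_succ (P : A → A → ℝ≥0∞) (S : Finset A) (m : ℕ) (a : A) :
    chainMass P S (m + 1) a = ∑ b ∈ S, P a b * chainMass P S m b := by
  simp only [chainMass, sum_piFinset_const_succ, List.ofFn_cons, chainProb, Finset.mul_sum]

lemma sum_wordProb_piFinset (p : A → ℝ≥0∞) (P : A → A → ℝ≥0∞) (S : Finset A) (m : ℕ) :
    ∑ w ∈ Fintype.piFinset (fun _ : Fin (m + 1) => S), wordProb p P (List.ofFn w) =
      ∑ a ∈ S, p a * chainMass P S m a := by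
  simp only [chainMass, sum_piFinset_const_succ, List.ofFn_cons, wordProb, Finset.mul_sum]

end ChainMass

lemma not_eventually_linear_mul_pow_mem_Ioo {α β s K₁ K₂ : ℝ} (hα : 0 < α) (hs : 0 ≤ s)
    (hK₁ : 0 < K₁) : ¬ ∀ᶠ n : ℕ in atTop, (n * α + β) * s ^ n ∈ Set.Ioo K₁ K₂ := by
  intro h
  rcases lt_or_ge s 1 with hs1 | hs1
  · have hlim : Tendsto (fun n : ℕ => (n * α + β) * s ^ n) atTop (𝓝 0) := by
      have := ((tendsto_self_mul_const_pow_of_lt_one hs hs1).const_mul α).add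
        ((tendsto_pow_atTop_nhds_zero_of_lt_one hs hs1).const_mul β)
      rw [mul_zero, mul_zero, add_zero] at this
      exact this.congr fun n => by ring
    obtain ⟨n, hn, hn'⟩ := (h.and ((tendsto_order.1 hlim).2 K₁ hK₁)).exists
    exact hn'.not_gt hn.1
  · have hlin : Tendsto (fun n : ℕ => n * α + β) atTop atTop :=
      tendsto_atTop_add_const_right _ β (tendsto_natCast_atTop_atTop.atTop_mul_const hα)
    obtain ⟨n, hn, hn', hn0⟩ := (h.and ((hlin.eventually_ge_atTop K₂).and
      (hlin.eventually_ge_atTop 0))).exists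
    have : n * α + β ≤ (n * α + β) * s ^ n := le_mul_of_one_le_right hn0 (one_le_pow₀ hs1)
    linarith [hn.2]

lemma toReal_linear_mul_inv_two_pow_div_pow {x y : ℝ≥0∞} (hx : x ≠ ⊤) (hy : y ≠ ⊤) {c : ℝ}
    (hc : c ≠ 0) (m : ℕ) :
    (((m + 1) * x + y) * 2⁻¹ ^ m).toReal / c ^ (m + 1) =
      (m * (x.toReal / c) + (x.toReal + y.toReal) / c) * (2 * c)⁻¹ ^ m := by
  simp only [ENNReal.toReal_mul, ne_eq, ENNReal.add_eq_top, ENNReal.natCast_ne_top,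
    ENNReal.one_ne_top, or_self, not_false_eq_true, hx, ENNReal.mul_ne_top, hy, ENNReal.toReal_add,
    ENNReal.toReal_natCast, ENNReal.toReal_one, ENNReal.toReal_pow, ENNReal.toReal_inv,
    ENNReal.toReal_ofNat, inv_pow, pow_succ, mul_inv_rev, mul_pow]
  field_simp
  ring

instance : MeasurableSingletonClass Edge5 := ⟨fun _ => trivial⟩

lemma filter_label5_eq_e : ({a | Label5 a = .e} : Finset Edge5) = {.e, .f, .g, .h} := by decide

lemma exists_pred_mem_edgeSet5 (a : Edge5) : ∃ b, (b, a) ∈ EdgeSet5 :=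
  ⟨if src5 a then .g else .e, by cases a <;> rfl⟩

lemma exists_succ_mem_edgeSet5 (a : Edge5) : ∃ b, (a, b) ∈ EdgeSet5 :=
  ⟨if tgt5 a then .g else .e, by cases a <;> rfl⟩

-- From `J` every step keeps weight `1/4 + 1/4`; from `I` a path may cross to `J` at any step.
lemma chainMass_P5 (m : ℕ) (a : Edge5) :
    chainMass P5 {a | Label5 a = .e} m a = (if tgt5 a then 1 else (m + 1 : ℝ≥0∞)) * 2⁻¹ ^ m := by
  rw [filter_label5_eq_e]
  induction m generalizing a with
  | zero => simp [chainMass_zero]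
  | succ m ih =>
    have hhalf : (1 / 2 : ℝ≥0∞) = 2⁻¹ := one_div 2
    have hquarter : (1 / 4 : ℝ≥0∞) = 2⁻¹ * 2⁻¹ := by
      rw [← ENNReal.mul_inv (by norm_num) (by norm_num)]; norm_num
    have hhalves (x : ℝ≥0∞) : 2⁻¹ * 2⁻¹ * x + 2⁻¹ * 2⁻¹ * x = 2⁻¹ * x := by
      rw [← add_mul, ← mul_add, ENNReal.inv_two_add_inv_two, mul_one]
    rw [chainMass_succ]
    cases a <;>
      simp only [P5, tgt5, src5, q5, hhalf, hquarter, ih, ite_mul,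
        zero_mul, Finset.mem_insert, reduceCtorEq, Finset.mem_singleton, or_self,
        not_false_eq_true, Finset.sum_insert, ↓reduceIte, Bool.false_eq_true, Bool.true_eq_false,
        one_mul, Finset.sum_singleton, add_zero, zero_add, hhalves, Nat.cast_add, Nat.cast_one,
        pow_succ'] <;>
      ring

lemma IsMarkov.measure_cylList_P5 {μ : Measure (ℤ → Edge5)} {p : Edge5 → ℝ≥0∞}
    (hμ : IsMarkov (SFT EdgeSet5) μ p P5) (a : Edge5) (l : List Edge5) :
    μ (cylList 0 (a :: l)) = wordProb p P5 (a :: l) :=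
  hμ.measure_cylList_cons (fun _ _ h => by_contra fun h' => h (if_neg h'))
    exists_pred_mem_edgeSet5 exists_succ_mem_edgeSet5 a l

lemma map_label5_cylSeg_const {μ : Measure (ℤ → Edge5)} {p : Edge5 → ℝ≥0∞}
    (hμ : IsMarkov (SFT EdgeSet5) μ p P5) (m : ℕ) :
    μ.map (blockCode Label5) (cylSeg (fun _ => .e) 0 ((m + 1 : ℕ) - 1)) =
      ((m + 1) * p .e + (p .f + p .g + p .h)) * 2⁻¹ ^ m := by
  have hcyl (w : Fin (m + 1) → Edge5) :
      μ (cylList 0 (List.ofFn w)) = wordProb p P5 (List.ofFn w) := by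
    rw [List.ofFn_succ]
    exact hμ.measure_cylList_P5 _ _
  rw [map_blockCode_cylSeg measurable_from_top, Finset.sum_congr rfl fun w _ => hcyl w,
    sum_wordProb_piFinset]
  simp only [chainMass_P5]
  rw [filter_label5_eq_e]
  simp only [tgt5, Finset.mem_insert, reduceCtorEq, Finset.mem_singleton, or_self,
    not_false_eq_true, Finset.sum_insert, Bool.false_eq_true, ↓reduceIte, one_mul,
    Finset.sum_singleton]
  ring

theorem example_transitional_not_gibbs_general
    (X : Set (ℤ → Edge5)) (hX : X = SFT EdgeSet5)
    (Y : Set (ℤ → Edge5)) (hY : Y = blockCode Label5 '' X)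
    (μ : Measure (ℤ → Edge5)) (p : Edge5 → ℝ≥0∞)
    (hμ : IsMarkov X μ p P5) (hfs : FullySupported X μ) :
    ∀ f : (ℤ → Edge5) → ℝ, ContinuousOn f Y →
      ¬ IsGibbs Y (μ.map (blockCode Label5)) f := by
  subst hX hY
  rintro f - ⟨K₁, K₂, Pr, hK₁, -, hG⟩
  set z : ℤ → Edge5 := fun _ => .e
  have hz : z ∈ blockCode Label5 '' SFT EdgeSet5 := ⟨z, fun _ => rfl, rfl⟩
  have hpe : 0 < (p .e).toReal := ENNReal.toReal_pos (hμ.init_pos hfs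
    (wordIn_SFT_of_isChain exists_pred_mem_edgeSet5 exists_succ_mem_edgeSet5
      (List.cons_ne_nil _ _) (List.isChain_singleton _))).ne' (hμ.init_ne_top _)
  set c := Real.exp (f z - Pr)
  refine not_eventually_linear_mul_pow_mem_Ioo (α := (p .e).toReal / c)
    (β := ((p .e).toReal + (p .f + p .g + p .h).toReal) / c) (s := (2 * c)⁻¹) (K₂ := K₂)
    (by positivity) (by positivity) hK₁ (Eventually.of_forall fun m => ?_)
  have hexp : Real.exp (-((m + 1 : ℕ) : ℝ) * Pr + (m + 1 : ℕ) * f z) = c ^ (m + 1) := by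
    rw [← Real.exp_nat_mul]
    ring_nf
  have h := hG z hz (m + 1) le_add_self
  rwa [map_label5_cylSeg_const hμ, birkhoff_of_shiftMap_eq rfl, hexp,
    toReal_linear_mul_inv_two_pow_div_pow (hμ.init_ne_top _) (by simp [hμ.init_ne_top])
      (Real.exp_pos _).ne'] at h

/-- **Example 3.1.**
For the labelled graph of Figure 1, the stationary fully supported 1-step Markov measure
`μ` with the given transition probabilities is pushed forward by `π` to a measure `ν`
which is not a Gibbs measure for any continuous potential. -/
theorem example_transitional_not_gibbs
    (X : Set (ℤ → Edge5)) (hX : X = SFT EdgeSet5)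
    (Y : Set (ℤ → Edge5)) (hY : Y = blockCode Label5 '' X)
    (μ : Measure (ℤ → Edge5)) (p : Edge5 → ℝ≥0∞)
    (hstat : ∀ v : Edge5, p v = ∑ u : Edge5, p u * P5 u v)
    (hμ : IsMarkov X μ p P5) (hfs : FullySupported X μ) :
    ∀ f : (ℤ → Edge5) → ℝ, ContinuousOn f Y →
      ¬ IsGibbs Y (μ.map (blockCode Label5)) f :=
  example_transitional_not_gibbs_general X hX Y hY μ p hμ hfs

end GibbsPaper
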